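/- Let α₀, β₀ > 0, d > −α₀, c > −β₀, and define the functional Φ(q) = ∫ (cγ − d·log γ) dq(γ) + KL(q ‖ Gamma(α₀, β₀)) over probability measures q on (0, ∞) with q ≪ Gamma(α₀, β₀), finite KL(q‖Gamma(α₀,β₀)), and γ ↦ cγ − d·log γ q-integrable. Then Φ is uniquely minimized at q* = Gamma(α₀ + d, β₀ + c), and the minimum value is −log[(Γ(α₀+d)/Γ(α₀)) · β₀^{α₀}/(β₀+c)^{α₀+d}]. -/

import Mathlib

/-!
`Gamma(α₀ + d, β₀ + c)` is the exponential tilt of `p = Gamma(α₀, β₀)` by `γ ↦ -(cγ - d log γ)`,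
since its density is `γ^d e^{-cγ} / Z` times that of `p`, with
`Z = Γ(α₀ + d) β₀^α₀ / (Γ(α₀) (β₀ + c)^(α₀ + d))`. For any `g`, the log-likelihood ratios satisfy
`∫ g dq + KL(q‖p) = KL(q‖p.tilted (-g)) - log ∫ e^{-g} dp`, and the Kullback–Leibler divergence
is nonnegative and vanishes only between equal measures.
-/

open MeasureTheory ProbabilityTheory
open scoped ENNReal NNReal

open Classical in
noncomputable def klDiv {Ω : Type*} [MeasurableSpace Ω] (q p : Measure Ω) : ℝ≥0∞ :=
  if q ≪ p ∧ Integrable (llr q p) q then ENNReal.ofReal (∫ x, llr q p x ∂q) else ⊤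

open Real

section GibbsVariationalPrinciple

variable {Ω : Type*} [MeasurableSpace Ω] {μ ν : Measure Ω}

-- Mathlib's divergence carries the extra term `ν univ - μ univ`.
lemma klDiv_eq_informationTheory_klDiv (h : μ Set.univ = ν Set.univ) :
    klDiv μ ν = InformationTheory.klDiv μ ν := by
  by_cases hfin : μ ≪ ν ∧ Integrable (llr μ ν) μ
  · rw [klDiv, if_pos hfin, InformationTheory.klDiv_of_ac_of_integrable hfin.1 hfin.2,
      measureReal_def, measureReal_def, h, add_sub_cancel_right]
  · rw [klDiv, if_neg hfin, eq_comm, InformationTheory.klDiv_eq_top_iff]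
    exact fun hac hint ↦ hfin ⟨hac, hint⟩

variable [IsProbabilityMeasure μ] [IsProbabilityMeasure ν] {g : Ω → ℝ}

lemma klDiv_tilted_ne_top (hkl : klDiv μ ν ≠ ⊤) (hg : Integrable g μ)
    (hexp : Integrable (fun x ↦ exp (-g x)) ν) :
    klDiv μ (ν.tilted fun x ↦ -g x) ≠ ⊤ := by
  have : IsProbabilityMeasure (ν.tilted fun x ↦ -g x) := isProbabilityMeasure_tilted hexp
  rw [klDiv_eq_informationTheory_klDiv (by simp), InformationTheory.klDiv_ne_top_iff] at hkl ⊢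
  exact ⟨hkl.1.trans (absolutelyContinuous_tilted hexp),
    integrable_llr_tilted_right hkl.1 hg.neg hkl.2 hexp⟩

lemma integral_add_toReal_klDiv_eq_toReal_klDiv_tilted (hkl : klDiv μ ν ≠ ⊤)
    (hg : Integrable g μ) (hexp : Integrable (fun x ↦ exp (-g x)) ν) :
    ∫ x, g x ∂μ + (klDiv μ ν).toReal =
      (klDiv μ (ν.tilted fun x ↦ -g x)).toReal - log (∫ x, exp (-g x) ∂ν) := by
  have : IsProbabilityMeasure (ν.tilted fun x ↦ -g x) := isProbabilityMeasure_tilted hexp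
  rw [klDiv_eq_informationTheory_klDiv (by simp), InformationTheory.klDiv_ne_top_iff] at hkl
  obtain ⟨hac, hllr⟩ := hkl
  rw [klDiv_eq_informationTheory_klDiv (by simp), klDiv_eq_informationTheory_klDiv (by simp),
    InformationTheory.toReal_klDiv_of_measure_eq hac (by simp),
    InformationTheory.toReal_klDiv_of_measure_eq (hac.trans (absolutelyContinuous_tilted hexp))
      (by simp),
    integral_llr_tilted_right (f := fun x ↦ -g x) hac hg.neg hexp hllr, integral_neg]
  ring

theorem gibbs_variational_principle (hkl : klDiv μ ν ≠ ⊤) (hg : Integrable g μ)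
    (hexp : Integrable (fun x ↦ exp (-g x)) ν) :
    -log (∫ x, exp (-g x) ∂ν) ≤ ∫ x, g x ∂μ + (klDiv μ ν).toReal ∧
      (∫ x, g x ∂μ + (klDiv μ ν).toReal = -log (∫ x, exp (-g x) ∂ν) ↔
        μ = ν.tilted fun x ↦ -g x) := by
  have : IsProbabilityMeasure (ν.tilted fun x ↦ -g x) := isProbabilityMeasure_tilted hexp
  rw [integral_add_toReal_klDiv_eq_toReal_klDiv_tilted hkl hg hexp]
  refine ⟨by linarith [ENNReal.toReal_nonneg (a := klDiv μ (ν.tilted fun x ↦ -g x))], ?_⟩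
  rw [sub_eq_neg_self, ENNReal.toReal_eq_zero_iff, or_iff_left (klDiv_tilted_ne_top hkl hg hexp),
    klDiv_eq_informationTheory_klDiv (by simp), InformationTheory.klDiv_eq_zero_iff]

end GibbsVariationalPrinciple

section GammaTilt

variable {a r d c : ℝ}

-- The identity fails at `x = 0`, where `0 ^ (a - 1)` and `log 0` take junk values.
lemma gammaPDFReal_mul_exp (had : 0 < a + d) (hrc : 0 < r + c) {x : ℝ} (hx : x ≠ 0) :
    gammaPDFReal a r x * exp (-(c * x - d * log x)) =
      Gamma (a + d) / Gamma a * r ^ a / (r + c) ^ (a + d) * gammaPDFReal (a + d) (r + c) x := by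
  rcases hx.lt_or_gt with hneg | hpos
  · simp [gammaPDFReal, not_le.2 hneg]
  · have hpow : x ^ (a - 1) * exp (-(c * x - d * log x)) * exp (-(r * x)) =
        x ^ (a + d - 1) * exp (-((r + c) * x)) := by
      rw [show a + d - 1 = (a - 1) + d by ring, rpow_add hpos, rpow_def_of_pos hpos d]
      simp only [mul_assoc, ← exp_add]
      ring_nf
    have hΓ : Gamma (a + d) ≠ 0 := (Gamma_pos_of_pos had).ne'
    have hrc' : (r + c) ^ (a + d) ≠ 0 := (rpow_pos_of_pos hrc _).ne'
    simp only [gammaPDFReal, if_pos hpos.le]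
    calc r ^ a / Gamma a * x ^ (a - 1) * exp (-(r * x)) * exp (-(c * x - d * log x))
        = r ^ a / Gamma a * (x ^ (a - 1) * exp (-(c * x - d * log x)) * exp (-(r * x))) := by
          ring
      _ = r ^ a / Gamma a * (x ^ (a + d - 1) * exp (-((r + c) * x))) := by rw [hpow]
      _ = _ := by field_simp

lemma measurable_gammaPDF (a r : ℝ) : Measurable (gammaPDF a r) :=
  (measurable_gammaPDFReal a r).ennreal_ofReal

lemma integral_gammaMeasure (ha : 0 < a) (hr : 0 < r) (g : ℝ → ℝ) :
    ∫ x, g x ∂gammaMeasure a r = ∫ x, gammaPDFReal a r x * g x := by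
  rw [gammaMeasure, integral_withDensity_eq_integral_toReal_smul
    (measurable_gammaPDF a r) (ae_of_all _ fun _ ↦ ENNReal.ofReal_lt_top)]
  simp only [gammaPDF, ENNReal.toReal_ofReal (gammaPDFReal_nonneg ha hr _), smul_eq_mul]

lemma integrable_gammaMeasure_iff (ha : 0 < a) (hr : 0 < r) {g : ℝ → ℝ} :
    Integrable g (gammaMeasure a r) ↔ Integrable fun x ↦ gammaPDFReal a r x * g x := by
  rw [gammaMeasure, integrable_withDensity_iff_integrable_smul'
    (measurable_gammaPDF a r) (ae_of_all _ fun _ ↦ ENNReal.ofReal_lt_top)]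
  simp only [gammaPDF, ENNReal.toReal_ofReal (gammaPDFReal_nonneg ha hr _), smul_eq_mul]

lemma integrable_gammaPDFReal (ha : 0 < a) (hr : 0 < r) : Integrable (gammaPDFReal a r) := by
  have := isProbabilityMeasure_gammaMeasure ha hr
  simpa using (integrable_gammaMeasure_iff ha hr).1 (integrable_const (1 : ℝ))

lemma integral_gammaPDFReal (ha : 0 < a) (hr : 0 < r) : ∫ x, gammaPDFReal a r x = 1 := by
  have := isProbabilityMeasure_gammaMeasure ha hr
  simpa using (integral_gammaMeasure ha hr fun _ ↦ 1).symm

lemma gammaPDFReal_mul_exp_ae_eq (had : 0 < a + d) (hrc : 0 < r + c) :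
    (fun x ↦ gammaPDFReal a r x * exp (-(c * x - d * log x))) =ᵐ[volume]
      fun x ↦ Gamma (a + d) / Gamma a * r ^ a / (r + c) ^ (a + d) *
        gammaPDFReal (a + d) (r + c) x :=
  (Measure.ae_ne volume 0).mono fun _ hx ↦ gammaPDFReal_mul_exp had hrc hx

lemma integrable_exp_gammaMeasure (ha : 0 < a) (hr : 0 < r) (had : 0 < a + d)
    (hrc : 0 < r + c) :
    Integrable (fun x ↦ exp (-(c * x - d * log x))) (gammaMeasure a r) := by
  rw [integrable_gammaMeasure_iff ha hr, integrable_congr (gammaPDFReal_mul_exp_ae_eq had hrc)]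
  exact (integrable_gammaPDFReal had hrc).const_mul _

lemma integral_exp_gammaMeasure (ha : 0 < a) (hr : 0 < r) (had : 0 < a + d)
    (hrc : 0 < r + c) :
    ∫ x, exp (-(c * x - d * log x)) ∂gammaMeasure a r =
      Gamma (a + d) / Gamma a * r ^ a / (r + c) ^ (a + d) := by
  rw [integral_gammaMeasure ha hr, integral_congr_ae (gammaPDFReal_mul_exp_ae_eq had hrc),
    integral_const_mul, integral_gammaPDFReal had hrc, mul_one]

lemma gammaMeasure_tilted (ha : 0 < a) (hr : 0 < r) (had : 0 < a + d) (hrc : 0 < r + c) :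
    (gammaMeasure a r).tilted (fun x ↦ -(c * x - d * log x)) = gammaMeasure (a + d) (r + c) := by
  have hZ : 0 < Gamma (a + d) / Gamma a * r ^ a / (r + c) ^ (a + d) := by
    have := Gamma_pos_of_pos ha
    have := Gamma_pos_of_pos had
    positivity
  rw [Measure.tilted, integral_exp_gammaMeasure ha hr had hrc, gammaMeasure, gammaMeasure,
    ← withDensity_mul _ (measurable_gammaPDF a r) (by fun_prop)]
  refine withDensity_congr_ae ((Measure.ae_ne volume 0).mono fun x hx ↦ ?_)
  rw [Pi.mul_apply, gammaPDF, gammaPDF, ← ENNReal.ofReal_mul (gammaPDFReal_nonneg ha hr x),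
    ← mul_div_assoc, gammaPDFReal_mul_exp had hrc hx, mul_div_cancel_left₀ _ hZ.ne']

end GammaTilt

theorem gamma_update_argmin_general (α₀ β₀ d c : ℝ) (hα : 0 < α₀) (hβ : 0 < β₀)
    (hd : -α₀ < d) (hc : -β₀ < c)
    (q : Measure ℝ) [IsProbabilityMeasure q]
    (hkl : klDiv q (gammaMeasure α₀ β₀) ≠ ⊤)
    (hint : Integrable (fun γ => c * γ - d * Real.log γ) q) :
    -Real.log ((Real.Gamma (α₀ + d) / Real.Gamma α₀) * β₀ ^ α₀ / (β₀ + c) ^ (α₀ + d)) ≤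
        (∫ γ, (c * γ - d * Real.log γ) ∂q) + (klDiv q (gammaMeasure α₀ β₀)).toReal ∧
      ((∫ γ, (c * γ - d * Real.log γ) ∂q) + (klDiv q (gammaMeasure α₀ β₀)).toReal =
          -Real.log ((Real.Gamma (α₀ + d) / Real.Gamma α₀) * β₀ ^ α₀ / (β₀ + c) ^ (α₀ + d)) ↔
        q = gammaMeasure (α₀ + d) (β₀ + c)) := by
  have hαd : 0 < α₀ + d := by linarith
  have hβc : 0 < β₀ + c := by linarith
  have := isProbabilityMeasure_gammaMeasure hα hβ
  have h := gibbs_variational_principle hkl hint (integrable_exp_gammaMeasure hα hβ hαd hβc)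
  rwa [integral_exp_gammaMeasure hα hβ hαd hβc, gammaMeasure_tilted hα hβ hαd hβc] at h

/-- Closed-form solution of the generic Gamma coordinate update (sub-problem 1): for
`α₀, β₀ > 0`, `d > −α₀`, `c > −β₀`, the functional
`Φ(q) = ∫ (cγ − d·log γ) dq(γ) + KL(q‖Gamma(α₀,β₀))`, over probability measures
`q ≪ Gamma(α₀,β₀)` with finite KL and integrable linear term, is uniquely minimized at
`q* = Gamma(α₀+d, β₀+c)`, with minimum value
`−log[(Γ(α₀+d)/Γ(α₀)) · β₀^{α₀}/(β₀+c)^{α₀+d}]`. -/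
theorem gamma_update_argmin (α₀ β₀ d c : ℝ) (hα : 0 < α₀) (hβ : 0 < β₀)
    (hd : -α₀ < d) (hc : -β₀ < c)
    (q : Measure ℝ) [IsProbabilityMeasure q] (hac : q ≪ gammaMeasure α₀ β₀)
    (hkl : klDiv q (gammaMeasure α₀ β₀) ≠ ⊤)
    (hint : Integrable (fun γ => c * γ - d * Real.log γ) q) :
    -Real.log ((Real.Gamma (α₀ + d) / Real.Gamma α₀) * β₀ ^ α₀ / (β₀ + c) ^ (α₀ + d)) ≤
        (∫ γ, (c * γ - d * Real.log γ) ∂q) + (klDiv q (gammaMeasure α₀ β₀)).toReal ∧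
      ((∫ γ, (c * γ - d * Real.log γ) ∂q) + (klDiv q (gammaMeasure α₀ β₀)).toReal =
          -Real.log ((Real.Gamma (α₀ + d) / Real.Gamma α₀) * β₀ ^ α₀ / (β₀ + c) ^ (α₀ + d)) ↔
        q = gammaMeasure (α₀ + d) (β₀ + c)) :=
  gamma_update_argmin_general α₀ β₀ d c hα hβ hd hc q hkl hint
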